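/- Let E₁, E₂ ⊆ ℝⁿ be origin-centered ellipsoids. If there exists a dense set T of directions in S^{n-1} such that for every u ∈ T the midpoints of chords of E₁ parallel to u and the midpoints of chords of E₂ parallel to u lie in one common hyperplane, then there exists r > 0 such that E₁ = r·E₂. -/

import Mathlib

open Set Pointwise

/-- The midpoints of all chords of `K` parallel to `u` lie in the affine
hyperplane `{y | ⟪v, y⟫ = c}`. -/
def chordMidpointsIn {n : ℕ} (K : Set (EuclideanSpace ℝ (Fin n)))
    (u v : EuclideanSpace ℝ (Fin n)) (c : ℝ) : Prop :=
  ∀ x : EuclideanSpace ℝ (Fin n), {s : ℝ | x + s • u ∈ K}.Nonempty →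
    (inner ℝ v (x + (((sInf {s : ℝ | x + s • u ∈ K}) +
        (sSup {s : ℝ | x + s • u ∈ K})) / 2) • u) : ℝ) = c

/-!
The chord of the ellipsoid `L '' closedBall 0 1` through `x` in direction `u` is symmetric about
the parameter `-⟪L⁻¹ u, L⁻¹ x⟫ / ‖L⁻¹ u‖ ^ 2`, so the chord midpoints form the hyperplane
`{w | ⟪L⁻¹ u, L⁻¹ w⟫ = 0}` conjugate to `u`. Having the same conjugate hyperplane is a closed and
homogeneous condition on `u`, so it passes from the dense set `T` to every direction. In
coordinates where the second ellipsoid is the unit ball, this says that every vector is an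
eigenvector of the self-adjoint map `K† K` whose quadratic form defines the first ellipsoid;
hence `K† K` is a positive multiple of the identity and the ellipsoids are dilates.
-/

open RealInnerProductSpace

theorem sInf_add_sSup_eq_of_forall_sub_mem {S : Set ℝ} {a : ℝ} (hne : S.Nonempty)
    (hbdd : BddAbove S) (hsymm : ∀ s ∈ S, a - s ∈ S) : sInf S + sSup S = a := by
  obtain ⟨M, hM⟩ := hbdd
  have hbdd' : BddBelow S := ⟨a - M, fun s hs => by linarith [hM (hsymm s hs)]⟩
  have h₁ : sSup S ≤ a - sInf S :=
    csSup_le hne fun s hs => by linarith [csInf_le hbdd' (hsymm s hs)]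
  have h₂ : a - sSup S ≤ sInf S :=
    le_csInf hne fun s hs => by linarith [le_csSup ⟨M, hM⟩ (hsymm s hs)]
  linarith

theorem IsClosed.mem_of_smul_mem_of_sphere_subset_closure {E : Type*} [NormedAddCommGroup E]
    [NormedSpace ℝ E] {S T : Set E} (hS : IsClosed S) (hsmul : ∀ c : ℝ, ∀ u ∈ S, c • u ∈ S)
    (hTS : T ⊆ S) (hT : Metric.sphere 0 1 ⊆ closure T) {u : E} (hu : u ≠ 0) : u ∈ S := by
  have hunit : ‖u‖⁻¹ • u ∈ S :=
    hS.closure_subset_iff.2 hTS (hT (by simp [norm_smul, norm_ne_zero_iff.2 hu]))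
  simpa [smul_smul, norm_ne_zero_iff.2 hu] using hsmul ‖u‖ _ hunit

theorem LinearEquiv.mem_image_closedBall_iff {E F : Type*} [SeminormedAddCommGroup E]
    [NormedSpace ℝ E] [AddCommGroup F] [Module ℝ F] (L : E ≃ₗ[ℝ] F) (y : F) (r : ℝ) :
    y ∈ L '' Metric.closedBall 0 r ↔ ‖L.symm y‖ ≤ r := by
  rw [L.image_eq_preimage_symm, mem_preimage, mem_closedBall_zero_iff]

theorem LinearEquiv.image_closedBall_eq_smul {E : Type*} [NormedAddCommGroup E]
    [NormedSpace ℝ E] {L₁ L₂ : E ≃ₗ[ℝ] E} {r : ℝ} (hr : 0 < r)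
    (h : ∀ y, ‖L₂.symm y‖ = r * ‖L₁.symm y‖) :
    L₁ '' Metric.closedBall 0 1 = r • L₂ '' Metric.closedBall 0 1 := by
  ext y
  rw [mem_smul_set_iff_inv_smul_mem₀ hr.ne', L₁.mem_image_closedBall_iff,
    L₂.mem_image_closedBall_iff, map_smul, norm_smul, h, Real.norm_of_nonneg (by positivity),
    inv_mul_cancel_left₀ hr.ne']

section InnerProductSpace

variable {E F G : Type*}
  [NormedAddCommGroup E] [InnerProductSpace ℝ E]
  [NormedAddCommGroup F] [InnerProductSpace ℝ F]
  [NormedAddCommGroup G] [InnerProductSpace ℝ G]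

theorem sInf_add_sSup_setOf_norm_add_smul_le {y z : E} {r : ℝ} (hz : z ≠ 0)
    (hne : {s : ℝ | ‖y + s • z‖ ≤ r}.Nonempty) :
    sInf {s : ℝ | ‖y + s • z‖ ≤ r} + sSup {s : ℝ | ‖y + s • z‖ ≤ r} =
      -2 * ⟪z, y⟫ / ‖z‖ ^ 2 := by
  have hz' : 0 < ‖z‖ := norm_pos_iff.2 hz
  have hsq : ∀ s : ℝ, ‖y + s • z‖ ^ 2 = ‖y‖ ^ 2 + 2 * s * ⟪z, y⟫ + s ^ 2 * ‖z‖ ^ 2 := by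
    intro s
    rw [norm_add_sq_real, inner_smul_right, norm_smul, Real.norm_eq_abs, mul_pow, sq_abs,
      real_inner_comm]
    ring
  refine sInf_add_sSup_eq_of_forall_sub_mem hne ⟨(r + ‖y‖) / ‖z‖, fun s hs => ?_⟩
    fun s hs => ?_
  · rw [le_div_iff₀ hz']
    calc s * ‖z‖ ≤ ‖s • z‖ := by rw [norm_smul, Real.norm_eq_abs]; gcongr; exact le_abs_self s
      _ = ‖(y + s • z) - y‖ := by rw [add_sub_cancel_left]
      _ ≤ r + ‖y‖ := (norm_sub_le _ _).trans (by gcongr; exact hs)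
  · have hnorm : ‖y + (-2 * ⟪z, y⟫ / ‖z‖ ^ 2 - s) • z‖ = ‖y + s • z‖ := by
      rw [← sq_eq_sq₀ (norm_nonneg _) (norm_nonneg _), hsq, hsq]
      field_simp
      ring
    exact hnorm.trans_le hs

/-- The directions `u` that have the same conjugate hyperplane `{w | ⟪A u, A w⟫ = 0}` for the
form `⟪A ·, A ·⟫` as for `⟪B ·, B ·⟫`. -/
def conjugateCoincidence (A : E →ₗ[ℝ] F) (B : E →ₗ[ℝ] G) : Set E :=
  {u | ∀ w, ‖B u‖ ^ 2 * ⟪A u, A w⟫ = ‖A u‖ ^ 2 * ⟪B u, B w⟫}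

theorem isClosed_conjugateCoincidence [FiniteDimensional ℝ E] (A : E →ₗ[ℝ] F)
    (B : E →ₗ[ℝ] G) : IsClosed (conjugateCoincidence A B) := by
  have hA := A.continuous_of_finiteDimensional
  have hB := B.continuous_of_finiteDimensional
  simp only [conjugateCoincidence, ofPred_forall]
  exact isClosed_iInter fun w => isClosed_eq (by fun_prop) (by fun_prop)

theorem smul_mem_conjugateCoincidence {A : E →ₗ[ℝ] F} {B : E →ₗ[ℝ] G} (c : ℝ) {u : E}
    (hu : u ∈ conjugateCoincidence A B) : c • u ∈ conjugateCoincidence A B := by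
  intro w
  simp only [map_smul, norm_smul, inner_smul_left, mul_pow, Real.norm_eq_abs, sq_abs,
    RCLike.conj_to_real]
  linear_combination c ^ 3 * hu w

theorem exists_sq_norm_eq_mul_sq_norm [FiniteDimensional ℝ F] [FiniteDimensional ℝ G]
    (A : E →ₗ[ℝ] F) (B : E ≃ₗ[ℝ] G) (h : ∀ u ≠ 0, u ∈ conjugateCoincidence A B.toLinearMap) :
    ∃ c : ℝ, ∀ y, ‖A y‖ ^ 2 = c * ‖B y‖ ^ 2 := by
  set K := A ∘ₗ (B.symm : G →ₗ[ℝ] E)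
  have heigen : ∀ a ≠ 0, LinearMap.adjoint K (K a) = (‖K a‖ ^ 2 / ‖a‖ ^ 2) • a := by
    intro a ha
    have ha' : ‖a‖ ^ 2 ≠ 0 := by positivity
    refine ext_inner_right ℝ fun b => ?_
    have := h (B.symm a) (by simpa using ha) (B.symm b)
    simp only [LinearEquiv.coe_coe, LinearEquiv.apply_symm_apply] at this
    rw [LinearMap.adjoint_inner_left, inner_smul_left, RCLike.conj_to_real]
    field_simp
    linear_combination this
  obtain ⟨c, hc⟩ := LinearMap.exists_eq_smul_id_of_forall_notLinearIndependent
    (f := LinearMap.adjoint K ∘ₗ K) fun a => by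
      rcases eq_or_ne a 0 with rfl | ha
      · exact fun hli => hli.ne_zero 0 (by simp)
      · rw [LinearIndependent.pair_iff' ha, not_forall_not]
        exact ⟨_, (heigen a ha).symm⟩
  refine ⟨c, fun y => ?_⟩
  have hKy : K (B y) = A y := by simp [K]
  have := congrArg (fun f => ⟪f (B y), B y⟫) hc
  simp only [LinearMap.comp_apply, LinearMap.adjoint_inner_left, hKy, LinearMap.smul_apply,
    Module.End.one_apply, inner_smul_left, RCLike.conj_to_real] at this
  rwa [real_inner_self_eq_norm_sq, real_inner_self_eq_norm_sq] at this

theorem exists_pos_norm_eq_mul_norm {A : E →ₗ[ℝ] F} {B : E →ₗ[ℝ] G} {c : ℝ}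
    (hA : Function.Injective A) (h : ∀ y, ‖A y‖ ^ 2 = c * ‖B y‖ ^ 2) :
    ∃ r > 0, ∀ y, ‖A y‖ = r * ‖B y‖ := by
  rcases subsingleton_or_nontrivial E with hE | hE
  · exact ⟨1, one_pos, fun y => by simp [Subsingleton.elim y 0]⟩
  obtain ⟨y₀, hy₀⟩ := exists_ne (0 : E)
  have hc : 0 < c := by
    have hAy₀ : 0 < ‖A y₀‖ ^ 2 := by
      have : A y₀ ≠ 0 := (map_ne_zero_iff A hA).2 hy₀
      positivity
    rw [h] at hAy₀
    exact pos_of_mul_pos_left hAy₀ (by positivity)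
  refine ⟨√c, Real.sqrt_pos.2 hc, fun y => ?_⟩
  rw [← Real.sqrt_sq (norm_nonneg (A y)), h, Real.sqrt_mul hc.le, Real.sqrt_sq (norm_nonneg _)]

end InnerProductSpace

section Euclidean

variable {n : ℕ}

local notation "𝔼" => EuclideanSpace ℝ (Fin n)

theorem sq_norm_mul_inner_eq_of_chordMidpointsIn {L : 𝔼 ≃ₗ[ℝ] 𝔼} {u v : 𝔼} {c : ℝ}
    (hu : u ≠ 0) (h : chordMidpointsIn (L '' Metric.closedBall 0 1) u v c) (w : 𝔼) :
    ‖L.symm u‖ ^ 2 * ⟪v, w⟫ = ⟪v, u⟫ * ⟪L.symm u, L.symm w⟫ := by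
  have hz : L.symm u ≠ 0 := by simpa using hu
  have hz' : ‖L.symm u‖ ^ 2 ≠ 0 := by positivity
  have hmid : ∀ x, ‖L.symm x‖ ≤ 1 →
      ‖L.symm u‖ ^ 2 * ⟪v, x⟫ - ⟪v, u⟫ * ⟪L.symm u, L.symm x⟫ = c * ‖L.symm u‖ ^ 2 := by
    intro x hx
    have hchord : {s : ℝ | x + s • u ∈ L '' Metric.closedBall 0 1} =
        {s : ℝ | ‖L.symm x + s • L.symm u‖ ≤ 1} := by
      ext s
      simp only [mem_ofPred_eq, L.mem_image_closedBall_iff, map_add, map_smul]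
    have hne : {s : ℝ | ‖L.symm x + s • L.symm u‖ ≤ 1}.Nonempty := ⟨0, by simpa using hx⟩
    have := h x (hchord ▸ hne)
    rw [hchord, sInf_add_sSup_setOf_norm_add_smul_le hz hne, inner_add_right,
      inner_smul_right] at this
    rw [← this]
    field_simp
    ring
  have hc : c = 0 := by simpa [hz'] using (hmid 0 (by simp)).symm
  -- the chord condition only sees points of the ellipsoid, so shrink `w` into it
  set t := (‖L.symm w‖ + 1)⁻¹
  have ht : 0 < t := by positivity
  have htw : ‖L.symm (t • w)‖ ≤ 1 := by
    rw [map_smul, norm_smul, Real.norm_of_nonneg ht.le, inv_mul_le_one₀ (by positivity)]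
    linarith
  have := hmid (t • w) htw
  rw [hc, zero_mul, map_smul, inner_smul_right, inner_smul_right] at this
  have : t * (‖L.symm u‖ ^ 2 * ⟪v, w⟫ - ⟪v, u⟫ * ⟪L.symm u, L.symm w⟫) = 0 := by
    linear_combination this
  linarith [(mul_eq_zero.1 this).resolve_left ht.ne']

theorem mem_conjugateCoincidence_of_chordMidpointsIn {L₁ L₂ : 𝔼 ≃ₗ[ℝ] 𝔼} {u v : 𝔼} {c : ℝ}
    (hu : u ≠ 0) (hv : v ≠ 0) (h₁ : chordMidpointsIn (L₁ '' Metric.closedBall 0 1) u v c)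
    (h₂ : chordMidpointsIn (L₂ '' Metric.closedBall 0 1) u v c) :
    u ∈ conjugateCoincidence L₂.symm.toLinearMap L₁.symm.toLinearMap := by
  have e₁ := sq_norm_mul_inner_eq_of_chordMidpointsIn hu h₁
  have e₂ := sq_norm_mul_inner_eq_of_chordMidpointsIn hu h₂
  have hvu : ⟪v, u⟫ ≠ 0 := by
    intro hvu
    have : L₁.symm u ≠ 0 := by simpa using hu
    simpa [hvu, this, hv] using e₁ v
  intro w
  simp only [LinearEquiv.coe_coe]
  have : ⟪v, u⟫ * (‖L₁.symm u‖ ^ 2 * ⟪L₂.symm u, L₂.symm w⟫ -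
      ‖L₂.symm u‖ ^ 2 * ⟪L₁.symm u, L₁.symm w⟫) = 0 := by
    linear_combination ‖L₂.symm u‖ ^ 2 * e₁ w - ‖L₁.symm u‖ ^ 2 * e₂ w
  linarith [(mul_eq_zero.1 this).resolve_left hvu]

end Euclidean

/-- Two origin-centered ellipsoids whose chord-midpoint hyperplanes coincide
for a dense set of directions are dilates of each other. -/
theorem stmt9 {n : ℕ}
    (L₁ L₂ : EuclideanSpace ℝ (Fin n) ≃ₗ[ℝ] EuclideanSpace ℝ (Fin n))
    (T : Set (EuclideanSpace ℝ (Fin n)))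
    (hT : T ⊆ Metric.sphere (0 : EuclideanSpace ℝ (Fin n)) 1)
    (hdense : Metric.sphere (0 : EuclideanSpace ℝ (Fin n)) 1 ⊆ closure T)
    (hmid : ∀ u ∈ T, ∃ v : EuclideanSpace ℝ (Fin n), ∃ c : ℝ, v ≠ 0 ∧
      chordMidpointsIn ((L₁ : EuclideanSpace ℝ (Fin n) → EuclideanSpace ℝ (Fin n)) ''
        Metric.closedBall 0 1) u v c ∧
      chordMidpointsIn ((L₂ : EuclideanSpace ℝ (Fin n) → EuclideanSpace ℝ (Fin n)) ''
        Metric.closedBall 0 1) u v c) :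
    ∃ r : ℝ, 0 < r ∧
      (L₁ : EuclideanSpace ℝ (Fin n) → EuclideanSpace ℝ (Fin n)) ''
          Metric.closedBall 0 1 =
        r • ((L₂ : EuclideanSpace ℝ (Fin n) → EuclideanSpace ℝ (Fin n)) ''
          Metric.closedBall 0 1) := by
  have hTS : T ⊆ conjugateCoincidence L₂.symm.toLinearMap L₁.symm.toLinearMap := by
    intro u hu
    obtain ⟨v, c, hv, h₁, h₂⟩ := hmid u hu
    exact mem_conjugateCoincidence_of_chordMidpointsIn
      (ne_zero_of_mem_unit_sphere ⟨u, hT hu⟩) hv h₁ h₂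
  have hall : ∀ u ≠ 0, u ∈ conjugateCoincidence L₂.symm.toLinearMap L₁.symm.toLinearMap :=
    fun u hu => (isClosed_conjugateCoincidence _ _).mem_of_smul_mem_of_sphere_subset_closure
      (fun c _ => smul_mem_conjugateCoincidence c) hTS hdense hu
  obtain ⟨c, hc⟩ := exists_sq_norm_eq_mul_sq_norm _ L₁.symm hall
  obtain ⟨r, hr, hnorm⟩ := exists_pos_norm_eq_mul_norm L₂.symm.injective hc
  exact ⟨r, hr, LinearEquiv.image_closedBall_eq_smul hr hnorm⟩
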